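/- For any unit vector u ∈ ℝ³ and θ ∈ ℝ, the matrix exponential exp(θ u^×) equals I₃ + sin(θ) u^× + (1 - cos(θ)) u^× u^×. -/

import Mathlib

/-!
For a unit vector `u`, `(u^×)³ = -u^×`, and the formula holds for every element `K` of a real
Banach algebra with `K³ = -K`: the Rodrigues expression `R t` satisfies `R' = K R`, so
`exp (-t K) * R t` has derivative zero and equals its value `1` at `t = 0`.
-/

open Matrix Real

noncomputable section

attribute [local instance] Matrix.frobeniusNormedAddCommGroup Matrix.frobeniusNormedRing
  Matrix.frobeniusNormedAlgebra

/-- Skew-symmetric matrix associated with the cross product. -/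
def skew (w : Fin 3 → ℝ) : Matrix (Fin 3) (Fin 3) ℝ :=
  !![0, -w 2, w 1; w 2, 0, -w 0; -w 1, w 0, 0]

theorem skew_mul_skew_mul_skew (u : EuclideanSpace ℝ (Fin 3)) :
    skew u * skew u * skew u = -(‖u‖ ^ 2) • skew u := by
  rw [EuclideanSpace.real_norm_sq_eq, Fin.sum_univ_three]
  ext i j
  fin_cases i <;> fin_cases j <;> simp [skew, Matrix.mul_apply, Fin.sum_univ_three] <;> ring

section Rodrigues

variable {A : Type*} [NormedRing A] [NormedAlgebra ℝ A]

def rodrigues (K : A) (t : ℝ) : A := 1 + sin t • K + (1 - cos t) • (K * K)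

theorem hasDerivAt_rodrigues (K : A) (t : ℝ) :
    HasDerivAt (rodrigues K) (cos t • K + sin t • (K * K)) t := by
  have h := (((hasDerivAt_sin t).smul_const K).const_add 1).add
    (((hasDerivAt_cos t).const_sub 1).smul_const (K * K))
  rwa [neg_neg] at h

variable {K : A}

theorem mul_rodrigues (hK : K * K * K = -K) (t : ℝ) :
    K * rodrigues K t = cos t • K + sin t • (K * K) := by
  rw [rodrigues, mul_add, mul_add, mul_one, mul_smul_comm, mul_smul_comm, ← mul_assoc, hK]
  module

theorem exp_smul_neg_mul_rodrigues [CompleteSpace A] (hK : K * K * K = -K) (t : ℝ) :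
    NormedSpace.exp (t • -K) * rodrigues K t = 1 := by
  have hderiv (s : ℝ) : HasDerivAt (fun s ↦ NormedSpace.exp (s • -K) * rodrigues K s) 0 s := by
    refine ((hasDerivAt_exp_smul_const' (-K) s).mul (hasDerivAt_rodrigues K s)).congr_deriv ?_
    rw [← mul_rodrigues hK, neg_mul, neg_mul,
      ((Commute.refl K).neg_right.smul_right s).exp_right.eq, mul_assoc, neg_add_cancel]
  have := is_const_of_deriv_eq_zero (fun s ↦ (hderiv s).differentiableAt)
    (fun s ↦ (hderiv s).deriv) t 0
  simpa [rodrigues] using this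

theorem exp_smul_eq_rodrigues [CompleteSpace A] (hK : K * K * K = -K) (t : ℝ) :
    NormedSpace.exp (t • K) = rodrigues K t := by
  -- `exp_add_of_commute` is stated for normed `ℚ`-algebras
  let +nondep : NormedAlgebra ℚ A := .restrictScalars ℚ ℝ A
  have hcomm : Commute (t • K) (t • -K) := ((Commute.refl K).neg_right.smul_left t).smul_right t
  calc NormedSpace.exp (t • K)
      = NormedSpace.exp (t • K) * (NormedSpace.exp (t • -K) * rodrigues K t) := by
        rw [exp_smul_neg_mul_rodrigues hK, mul_one]
    _ = rodrigues K t := by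
        rw [← mul_assoc, ← NormedSpace.exp_add_of_commute hcomm, ← smul_add, add_neg_cancel,
          smul_zero, NormedSpace.exp_zero, one_mul]

end Rodrigues

/-- The matrix exponential of θ u^× equals Rodrigues' formula. -/
theorem exp_skew_eq_rodrigues (θ : ℝ) (u : EuclideanSpace ℝ (Fin 3)) (hu : ‖u‖ = 1) :
    NormedSpace.exp (θ • skew u) =
      1 + Real.sin θ • skew u + (1 - Real.cos θ) • (skew u * skew u) := by
  have hK : skew u * skew u * skew u = -skew u := by
    rw [skew_mul_skew_mul_skew, hu, one_pow, neg_smul, one_smul]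
  exact exp_smul_eq_rodrigues hK θ
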